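/- Let m and n be distinct squarefree integers, both different from 1, let A = ℤ[√m, √n] ⊆ ℂ, and let σ and τ be two distinct ring endomorphisms of A. Let D : A → A be a nonzero (σ,τ)-derivation with D(√m) = 0. Then D is inner if and only if there exists β ∈ A such that D(√n) = 2√n · β (equivalently, D(√n)/(2√n) ∈ A). -/

import Mathlib

/-!
Both `D` and an inner derivation `x ↦ β (τ x - σ x)` are `(σ,τ)`-derivations, and two
`(σ,τ)`-derivations agreeing on generators of `A` agree everywhere, so innerness of `D` is decided
on `√m` and `√n`. Comparing `D (√m √n)` with `D (√n √m)` gives `(σ √m - τ √m) D √n = 0`, and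
`D √n ≠ 0` since `D ≠ 0`; as `A` is a domain, `σ √m = τ √m`. So `D` is inner exactly when `D √n`
is a multiple of `τ √n - σ √n`. Both `σ √n` and `τ √n` are `±√n`, and they differ because `σ ≠ τ`
agree on `√m`; hence `τ √n - σ √n = ±2√n`.
-/

section TwistedDerivation

variable {A : Type*} [CommRing A]

def IsTwistedDerivation (σ τ : A →+* A) (D : A →ₗ[ℤ] A) : Prop :=
  ∀ x y, D (x * y) = D x * τ y + σ x * D y

def innerTwistedDerivation (σ τ : A →+* A) (β : A) : A →ₗ[ℤ] A :=
  LinearMap.mulLeft ℤ β ∘ₗ (τ.toAddMonoidHom - σ.toAddMonoidHom).toIntLinearMap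

variable {σ τ : A →+* A}

@[simp]
theorem innerTwistedDerivation_apply (β x : A) :
    innerTwistedDerivation σ τ β x = β * (τ x - σ x) :=
  rfl

theorem isTwistedDerivation_zero : IsTwistedDerivation σ τ 0 := by
  intro x y
  simp

theorem isTwistedDerivation_innerTwistedDerivation (β : A) :
    IsTwistedDerivation σ τ (innerTwistedDerivation σ τ β) := by
  intro x y
  simp only [innerTwistedDerivation_apply, map_mul]
  ring

namespace IsTwistedDerivation

variable {D D' : A →ₗ[ℤ] A}

theorem map_one (hD : IsTwistedDerivation σ τ D) : D 1 = 0 := by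
  simpa using hD 1 1

theorem ext_of_adjoin_eq_top {s : Set A} (hs : Algebra.adjoin ℤ s = ⊤)
    (hD : IsTwistedDerivation σ τ D) (hD' : IsTwistedDerivation σ τ D')
    (h : Set.EqOn D D' s) : D = D' := by
  ext x
  have hx : x ∈ Algebra.adjoin ℤ s := hs ▸ Algebra.mem_top
  induction hx using Algebra.adjoin_induction with
  | mem x hx => exact h hx
  | algebraMap r =>
    rw [Algebra.algebraMap_eq_smul_one, map_smul, map_smul, hD.map_one, hD'.map_one]
  | add x y _ _ hx hy => rw [map_add, map_add, hx, hy]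
  | mul x y _ _ hx hy => rw [hD, hD', hx, hy]

theorem sub_mul_map_eq_zero (hD : IsTwistedDerivation σ τ D) {a : A} (ha : D a = 0) (b : A) :
    (σ a - τ a) * D b = 0 := by
  have hcomm := congrArg D (mul_comm a b)
  rw [hD, hD, ha] at hcomm
  linear_combination hcomm

theorem map_eq_map_of_map_ne_zero [IsDomain A] (hD : IsTwistedDerivation σ τ D) {a b : A}
    (ha : D a = 0) (hb : D b ≠ 0) : σ a = τ a :=
  sub_eq_zero.mp ((mul_eq_zero.mp (hD.sub_mul_map_eq_zero ha b)).resolve_right hb)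

end IsTwistedDerivation

theorem RingHom.ext_of_adjoin_eq_top {s : Set A} (hs : Algebra.adjoin ℤ s = ⊤) {f g : A →+* A}
    (h : Set.EqOn f g s) : f = g :=
  RingHom.toIntAlgHom_injective (AlgHom.ext_of_adjoin_eq_top hs h)

theorem RingHom.map_eq_or_eq_neg_of_sq_eq_intCast [IsDomain A] (f : A →+* A) {x : A} {c : ℤ}
    (hx : x ^ 2 = c) : f x = x ∨ f x = -x := by
  rw [← sq_eq_sq_iff_eq_or_eq_neg, ← map_pow, hx, map_intCast]

end TwistedDerivation

section SignedRoot

variable {A : Type*} [CommRing A] {b b₁ b₂ : A}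

theorem exists_sub_eq_two_mul_mul_of_eq_or_eq_neg (h₁ : b₁ = b ∨ b₁ = -b)
    (h₂ : b₂ = b ∨ b₂ = -b) : ∃ γ, b₂ - b₁ = 2 * b * γ := by
  rcases h₁ with rfl | rfl <;> rcases h₂ with rfl | rfl
  exacts [⟨0, by ring⟩, ⟨-1, by ring⟩, ⟨1, by ring⟩, ⟨0, by ring⟩]

theorem exists_two_mul_eq_mul_sub_of_eq_or_eq_neg (h₁ : b₁ = b ∨ b₁ = -b)
    (h₂ : b₂ = b ∨ b₂ = -b) (hne : b₁ ≠ b₂) : ∃ ε, 2 * b = ε * (b₂ - b₁) := by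
  rcases h₁ with rfl | rfl <;> rcases h₂ with rfl | rfl
  exacts [absurd rfl hne, ⟨-1, by ring⟩, ⟨1, by ring⟩, absurd rfl hne]

end SignedRoot

theorem Algebra.adjoin_eq_top_of_image_val {R A : Type*} [CommSemiring R] [Semiring A] [Algebra R A]
    {s : Set A} {t : Set (Algebra.adjoin R s)} (h : Subtype.val '' t = s) :
    Algebra.adjoin R t = ⊤ := by
  apply Subalgebra.map_injective (f := (Algebra.adjoin R s).val) Subtype.val_injective
  rw [← Algebra.adjoin_image, Algebra.map_top, Subalgebra.range_val]
  exact congrArg (Algebra.adjoin R) h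

theorem stmt18_general (n : ℤ)
    (sm sn : ℂ) (hsn : sn ^ 2 = (n : ℂ))
    (a b : Algebra.adjoin ℤ ({sm, sn} : Set ℂ)) (ha : (a : ℂ) = sm) (hb : (b : ℂ) = sn)
    (σ τ : Algebra.adjoin ℤ ({sm, sn} : Set ℂ) →+* Algebra.adjoin ℤ ({sm, sn} : Set ℂ))
    (hστ : σ ≠ τ)
    (D : Algebra.adjoin ℤ ({sm, sn} : Set ℂ) →ₗ[ℤ] Algebra.adjoin ℤ ({sm, sn} : Set ℂ))
    (hD : ∀ x y, D (x * y) = D x * τ y + σ x * D y)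
    (hD0 : D ≠ 0) (hDa : D a = 0) :
    (∃ β, ∀ x, D x = β * (τ x - σ x)) ↔ (∃ β, D b = 2 * b * β) := by
  have hD : IsTwistedDerivation σ τ D := hD
  have hgen : Algebra.adjoin ℤ {a, b} = ⊤ :=
    Algebra.adjoin_eq_top_of_image_val (by simp [Set.image_pair, ha, hb])
  have hb2 : b ^ 2 = (n : Algebra.adjoin ℤ ({sm, sn} : Set ℂ)) :=
    Subtype.ext (by push_cast [hb]; exact hsn)
  have hσb := σ.map_eq_or_eq_neg_of_sq_eq_intCast hb2
  have hτb := τ.map_eq_or_eq_neg_of_sq_eq_intCast hb2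
  have hDb : D b ≠ 0 := fun hDb ↦ hD0 <|
    hD.ext_of_adjoin_eq_top hgen isTwistedDerivation_zero (by simp [Set.EqOn, hDa, hDb])
  have hσa : σ a = τ a := hD.map_eq_map_of_map_ne_zero hDa hDb
  constructor
  · rintro ⟨β, hβ⟩
    obtain ⟨γ, hγ⟩ := exists_sub_eq_two_mul_mul_of_eq_or_eq_neg hσb hτb
    exact ⟨β * γ, by rw [hβ, hγ]; ring⟩
  · rintro ⟨β, hβ⟩
    have hσb_ne : σ b ≠ τ b := fun h ↦
      hστ (RingHom.ext_of_adjoin_eq_top hgen (by simp [Set.EqOn, hσa, h]))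
    obtain ⟨ε, hε⟩ := exists_two_mul_eq_mul_sub_of_eq_or_eq_neg hσb hτb hσb_ne
    refine ⟨ε * β, fun x ↦ LinearMap.congr_fun (hD.ext_of_adjoin_eq_top hgen
      (isTwistedDerivation_innerTwistedDerivation (ε * β)) ?_) x⟩
    simp only [Set.EqOn, Set.mem_insert_iff, Set.mem_singleton_iff, innerTwistedDerivation_apply,
      forall_eq_or_imp, hDa, hσa, sub_self, mul_zero, forall_eq, hβ, hε, true_and]
    ring

/-- Let `m`, `n` be distinct squarefree integers, both different from `1`, let
`A = ℤ[√m, √n] ⊆ ℂ`, and let `σ`, `τ` be two distinct ring endomorphisms of `A`.  Let `D` be a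
nonzero `(σ,τ)`-derivation with `D √m = 0`.  Then `D` is inner if and only if there exists
`β ∈ A` with `D √n = 2 √n β` (i.e. `D √n / (2 √n) ∈ A`). -/
theorem stmt18 (m n : ℤ) (hm : Squarefree m) (hn : Squarefree n)
    (hm1 : m ≠ 1) (hn1 : n ≠ 1) (hmn : m ≠ n)
    (sm sn : ℂ) (hsm : sm ^ 2 = (m : ℂ)) (hsn : sn ^ 2 = (n : ℂ))
    (a b : Algebra.adjoin ℤ ({sm, sn} : Set ℂ)) (ha : (a : ℂ) = sm) (hb : (b : ℂ) = sn)
    (σ τ : Algebra.adjoin ℤ ({sm, sn} : Set ℂ) →+* Algebra.adjoin ℤ ({sm, sn} : Set ℂ))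
    (hστ : σ ≠ τ)
    (D : Algebra.adjoin ℤ ({sm, sn} : Set ℂ) →ₗ[ℤ] Algebra.adjoin ℤ ({sm, sn} : Set ℂ))
    (hD : ∀ x y, D (x * y) = D x * τ y + σ x * D y)
    (hD0 : D ≠ 0) (hDa : D a = 0) :
    (∃ β, ∀ x, D x = β * (τ x - σ x)) ↔ (∃ β, D b = 2 * b * β) :=
  stmt18_general n sm sn hsn a b ha hb σ τ hστ D hD hD0 hDa
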